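/- Let (S,d_S) be a separable metric space equipped with its Borel σ-algebra and a Borel probability measure μ making (S,μ) a standard Borel probability space, and let φ and φ_n (n ∈ ℕ) be measure-class-preserving Borel automorphisms of S. If φ_n → φ in the Koopman (strong operator) topology, then φ_n → φ in measure; that is, for every ε > 0, μ{ s ∈ S : d_S(φ_n(s), φ(s)) > ε } → 0 as n → ∞. -/

import Mathlib

/-!
Write `U_φ f = √(D_φ) · f ∘ φ⁻¹`. For a test set `A`, on the set where `ψ⁻¹ s ∈ A` but
`φ⁻¹ s ∉ A` the integrand of `‖U_ψ 1_A - U_φ 1_A‖²` is exactly `D_ψ`, whose integral there is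
`μ (A \ ψ⁻¹ (φ A))`. With `A = φ⁻¹ B` for a ball `B` this gives `μ (φ⁻¹ B \ φₙ⁻¹ B) → 0`.
By separability, finitely many balls of radius `ε / 2` carry all of `φ_* μ` up to `δ`, and
`d(φₙ s, φ s) < ε` as soon as `φ s` and `φₙ s` lie in a common such ball.
-/

open MeasureTheory Filter Topology Set Metric

noncomputable def koopman {S : Type*} [MeasurableSpace S] (μ : Measure S) (φ : S ≃ᵐ S)
    (f : S → ℝ) (s : S) : ℝ :=
  Real.sqrt (((μ.map φ).rnDeriv μ s).toReal) * f (φ.symm s)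

section Koopman

variable {S : Type*} [MeasurableSpace S] {μ : Measure S}

theorem koopman_indicator_one_sq (φ : S ≃ᵐ S) (A : Set S) (s : S) :
    koopman μ φ (A.indicator 1) s ^ 2 =
      (φ.symm ⁻¹' A).indicator (fun s => ((μ.map φ).rnDeriv μ s).toReal) s := by
  by_cases hs : φ.symm s ∈ A <;>
    simp [koopman, hs, Real.sq_sqrt ENNReal.toReal_nonneg]

variable [IsFiniteMeasure μ]

theorem memLp_koopman_indicator_one (φ : S ≃ᵐ S) {A : Set S} (hA : MeasurableSet A) :
    MemLp (koopman μ φ (A.indicator 1)) 2 μ := by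
  have hmeas : Measurable (koopman μ φ (A.indicator 1)) :=
    (Measure.measurable_rnDeriv _ _).ennreal_toReal.sqrt.mul
      ((measurable_one.indicator hA).comp φ.symm.measurable)
  rw [memLp_two_iff_integrable_sq hmeas.aestronglyMeasurable]
  simp_rw [koopman_indicator_one_sq]
  exact Measure.integrable_toReal_rnDeriv.indicator (φ.symm.measurable hA)

theorem measureReal_diff_preimage_le_integral_koopman_sub_sq (φ ψ : S ≃ᵐ S)
    (hψ : μ.map ψ ≪ μ) {A : Set S} (hA : MeasurableSet A) :
    μ.real (A \ ψ ⁻¹' (φ.symm ⁻¹' A)) ≤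
      ∫ s, (koopman μ ψ (A.indicator 1) s - koopman μ φ (A.indicator 1) s) ^ 2 ∂μ := by
  set X := ψ.symm ⁻¹' A \ φ.symm ⁻¹' A
  have hX : MeasurableSet X := (ψ.symm.measurable hA).diff (φ.symm.measurable hA)
  have hpre : ψ ⁻¹' X = A \ ψ ⁻¹' (φ.symm ⁻¹' A) := by
    ext s
    simp [X]
  have hpointwise : ∀ s, X.indicator (fun s => ((μ.map ψ).rnDeriv μ s).toReal) s ≤
      (koopman μ ψ (A.indicator 1) s - koopman μ φ (A.indicator 1) s) ^ 2 := by
    intro s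
    by_cases hs : s ∈ X
    · have hψs : ψ.symm s ∈ A := hs.1
      have hφs : φ.symm s ∉ A := hs.2
      simp [koopman, indicator_of_mem hs, hψs, hφs, Real.sq_sqrt ENNReal.toReal_nonneg]
    · simp only [indicator_of_notMem hs]
      positivity
  calc μ.real (A \ ψ ⁻¹' (φ.symm ⁻¹' A))
      = ∫ s in X, ((μ.map ψ).rnDeriv μ s).toReal ∂μ := by
        rw [Measure.setIntegral_toReal_rnDeriv hψ, ← hpre, measureReal_def, measureReal_def,
          MeasurableEquiv.map_apply]
    _ = ∫ s, X.indicator (fun s => ((μ.map ψ).rnDeriv μ s).toReal) s ∂μ :=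
        (integral_indicator hX).symm
    _ ≤ _ := integral_mono (Measure.integrable_toReal_rnDeriv.indicator hX)
        ((memLp_koopman_indicator_one ψ hA).sub
          (memLp_koopman_indicator_one φ hA)).integrable_sq hpointwise

theorem tendsto_measure_preimage_diff_of_tendsto_koopman {ι : Type*} {l : Filter ι}
    {φ : S ≃ᵐ S} {ψ : ι → S ≃ᵐ S} (hψ : ∀ i, μ.map (ψ i) ≪ μ) {B : Set S}
    (hB : MeasurableSet B)
    (hK : Tendsto (fun i => ∫ s, (koopman μ (ψ i) ((φ ⁻¹' B).indicator 1) s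
      - koopman μ φ ((φ ⁻¹' B).indicator 1) s) ^ 2 ∂μ) l (𝓝 0)) :
    Tendsto (fun i => μ (φ ⁻¹' B \ ψ i ⁻¹' B)) l (𝓝 0) := by
  refine (ENNReal.tendsto_toReal_zero_iff fun _ => measure_ne_top _ _).mp
    (squeeze_zero (fun _ => ENNReal.toReal_nonneg) (fun i => ?_) hK)
  rw [← measureReal_def]
  simpa using measureReal_diff_preimage_le_integral_koopman_sub_sq φ (ψ i) (hψ i)
    (φ.measurable hB)

end Koopman

section Cover

variable {β : Type*} [PseudoMetricSpace β] [TopologicalSpace.SeparableSpace β]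
  [MeasurableSpace β] [OpensMeasurableSpace β]

theorem exists_finset_measure_compl_iUnion_ball_lt (ν : Measure β) [IsFiniteMeasure ν]
    {r : ℝ} (hr : 0 < r) {δ : ENNReal} (hδ : 0 < δ) :
    ∃ t : Finset β, ν (⋃ x ∈ t, ball x r)ᶜ < δ := by
  cases isEmpty_or_nonempty β
  · exact ⟨∅, by simpa [Set.eq_empty_of_isEmpty] using hδ⟩
  have hcover : ⋃ n, ball (TopologicalSpace.denseSeq β n) r = univ := by
    rw [← biUnion_range (f := TopologicalSpace.denseSeq β) (g := fun x => ball x r)]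
    exact (dense_iff_iUnion_ball _).mp (TopologicalSpace.denseRange_denseSeq β) r hr
  obtain ⟨m, hm⟩ := exists_measure_iInter_lt
    (f := fun n => (ball (TopologicalSpace.denseSeq β n) r)ᶜ)
    (fun n => measurableSet_ball.compl.nullMeasurableSet) hδ ⟨0, measure_ne_top ν _⟩
    (by rw [← compl_iUnion, hcover, compl_univ])
  classical
  refine ⟨(Finset.Iic m).image (TopologicalSpace.denseSeq β), ?_⟩
  simpa [compl_iUnion] using hm

theorem tendstoInMeasure_of_tendsto_measure_preimage_ball_diff {ι α : Type*}
    [MeasurableSpace α] {μ : Measure α} [IsFiniteMeasure μ] {l : Filter ι}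
    {f : ι → α → β} {g : α → β} (hg : Measurable g)
    (h : ∀ x r, Tendsto (fun i => μ (g ⁻¹' ball x r \ f i ⁻¹' ball x r)) l (𝓝 0)) :
    TendstoInMeasure μ f l g := by
  rw [tendstoInMeasure_iff_dist]
  intro ε hε
  rw [ENNReal.tendsto_nhds_zero]
  intro δ hδ
  obtain ⟨t, ht⟩ := exists_finset_measure_compl_iUnion_ball_lt (μ.map g) (half_pos hε)
    (ENNReal.half_pos hδ.ne')
  rw [Measure.map_apply hg (t.measurableSet_biUnion fun x _ => measurableSet_ball).compl] at ht
  set r := ε / 2 with hr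
  have hsmall : ∀ᶠ i in l, ∑ x ∈ t, μ (g ⁻¹' ball x r \ f i ⁻¹' ball x r) < δ / 2 := by
    have hsum := tendsto_finsetSum t fun x _ => h x r
    rw [Finset.sum_const_zero] at hsum
    exact hsum.eventually_lt_const (ENNReal.half_pos hδ.ne')
  have hcover : ∀ i, {a | ε ≤ dist (f i a) (g a)} ⊆
      g ⁻¹' (⋃ x ∈ t, ball x r)ᶜ ∪ ⋃ x ∈ t, (g ⁻¹' ball x r \ f i ⁻¹' ball x r) := by
    intro i a ha
    by_contra hout
    obtain ⟨x, hx, hgx⟩ := mem_iUnion₂.mp (not_not.mp fun h' => hout (Or.inl h'))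
    have hfx : f i a ∈ ball x r :=
      not_not.mp fun h' => hout (Or.inr (mem_iUnion₂.mpr ⟨x, hx, hgx, h'⟩))
    have := dist_triangle_right (f i a) (g a) x
    rw [mem_ball] at hfx hgx
    linarith [show ε ≤ dist (f i a) (g a) from ha]
  filter_upwards [hsmall] with i hi
  calc μ {a | ε ≤ dist (f i a) (g a)}
      ≤ μ (g ⁻¹' (⋃ x ∈ t, ball x r)ᶜ) + ∑ x ∈ t, μ (g ⁻¹' ball x r \ f i ⁻¹' ball x r) :=
        (measure_mono (hcover i)).trans
          ((measure_union_le _ _).trans (add_le_add le_rfl (measure_biUnion_finset_le _ _)))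
    _ ≤ δ / 2 + δ / 2 := add_le_add ht.le hi.le
    _ = δ := ENNReal.add_halves δ

end Cover

theorem koopman_convergence_implies_convergence_in_measure_general
    {S : Type*} [MetricSpace S] [TopologicalSpace.SeparableSpace S]
    [MeasurableSpace S] [BorelSpace S]
    (μ : Measure S) [IsProbabilityMeasure μ]
    (φ : S ≃ᵐ S) (φn : ℕ → S ≃ᵐ S)
    (hφn : ∀ n, μ.map (φn n) ≪ μ ∧ μ ≪ μ.map (φn n))
    (hK : ∀ f : S → ℝ, Measurable f → Integrable (fun s => (f s) ^ 2) μ →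
      Tendsto
        (fun n => ∫ s,
          (Real.sqrt (((μ.map (φn n)).rnDeriv μ s).toReal) * f ((φn n).symm s)
            - Real.sqrt (((μ.map φ).rnDeriv μ s).toReal) * f (φ.symm s)) ^ 2 ∂μ)
        atTop (𝓝 0)) :
    ∀ ε > (0 : ℝ),
      Tendsto (fun n => μ {s : S | dist (φn n s) (φ s) > ε}) atTop (𝓝 0) := by
  intro ε hε
  have hconv : TendstoInMeasure μ (fun n => ⇑(φn n)) atTop φ :=
    tendstoInMeasure_of_tendsto_measure_preimage_ball_diff φ.measurable fun x r =>
      have hA : MeasurableSet (φ ⁻¹' ball x r) := φ.measurable measurableSet_ball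
      tendsto_measure_preimage_diff_of_tendsto_koopman (fun n => (hφn n).1) measurableSet_ball
        (hK _ (measurable_one.indicator hA)
          (memLp_indicator_const 2 hA (1 : ℝ) (Or.inr (measure_ne_top μ _))).integrable_sq)
  exact tendsto_of_tendsto_of_tendsto_of_le_of_le tendsto_const_nhds
    (tendstoInMeasure_iff_dist.mp hconv ε hε) (fun _ => zero_le)
    fun _ => measure_mono (ofPred_subset_ofPred.mpr fun _ => le_of_lt)

/-- If `(S, d_S)` is a separable metric space with its Borel
σ-algebra, `(S, μ)` is a standard Borel probability space, and `φₙ → φ` in the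
Koopman (strong operator) topology among measure-class-preserving Borel
automorphisms, then `φₙ → φ` in measure. -/
theorem koopman_convergence_implies_convergence_in_measure
    {S : Type*} [MetricSpace S] [TopologicalSpace.SeparableSpace S]
    [MeasurableSpace S] [BorelSpace S] [StandardBorelSpace S]
    (μ : Measure S) [IsProbabilityMeasure μ]
    (φ : S ≃ᵐ S) (φn : ℕ → S ≃ᵐ S)
    (hφ : μ.map φ ≪ μ ∧ μ ≪ μ.map φ)
    (hφn : ∀ n, μ.map (φn n) ≪ μ ∧ μ ≪ μ.map (φn n))
    (hK : ∀ f : S → ℝ, Measurable f → Integrable (fun s => (f s) ^ 2) μ →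
      Tendsto
        (fun n => ∫ s,
          (Real.sqrt (((μ.map (φn n)).rnDeriv μ s).toReal) * f ((φn n).symm s)
            - Real.sqrt (((μ.map φ).rnDeriv μ s).toReal) * f (φ.symm s)) ^ 2 ∂μ)
        atTop (𝓝 0)) :
    ∀ ε > (0 : ℝ),
      Tendsto (fun n => μ {s : S | dist (φn n s) (φ s) > ε}) atTop (𝓝 0) :=
  koopman_convergence_implies_convergence_in_measure_general μ φ φn hφn hK
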